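/- arXiv:0805.2963 — 3 statements merged into one kernel-verified Lean document; each statement's English description precedes it below -/
import Mathlib

section
/- (Adler–Kostant–Symes) Let g be a finite-dimensional real Lie algebra with a nondegenerate symmetric invariant bilinear form B, and let g₊, g₋ ⊆ g be Lie subalgebras with g = g₊ ⊕ g₋ as a direct sum of vector subspaces; let π₋ : g → g₋ denote the projection along g₊. Let f, h : g → ℝ be differentiable functions with B-gradients ∇f, ∇h : g → g (i.e. B(∇f(X), Y) = df_X(Y) for all X, Y) which are ad-invariant, i.e. ⁅∇f(X), X⁆ = 0 and ⁅∇h(X), X⁆ = 0 for all X ∈ g. Then f and h Poisson commute on g₊^⊥: for every X ∈ g with B(X, Y) = 0 for all Y ∈ g₊, one has B(X, ⁅π₋(∇f(X)), π₋(∇h(X))⁆) = 0. -/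
/-!
The ad-invariance `⁅∇f X, X⁆ = 0` together with invariance of `B` gives `B X ⁅∇f X, Y⁆ = 0`
for every `Y`. Writing `π₋ ∇f X = ∇f X - p` and `π₋ ∇h X = ∇h X - q` with `p, q ∈ g₊`, and
expanding the bracket, every term but `B X ⁅p, q⁆` is of this form, and `B X ⁅p, q⁆` vanishes
because `g₊` is a subalgebra and `X ∈ g₊^⊥`.
-/

namespace LinearMap.BilinForm

variable {R L M : Type*} [CommRing R] [LieRing L] [AddCommGroup M] [Module R M]
  [LieRingModule L M] {Φ : LinearMap.BilinForm R M}

theorem apply_lie_eq_zero_of_lie_eq_zero (hΦ : Φ.lieInvariant L) {u : L} {X : M}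
    (hu : ⁅u, X⁆ = 0) (v : M) : Φ X ⁅u, v⁆ = 0 := by
  simpa [hu] using (hΦ u X v).symm

end LinearMap.BilinForm

namespace LieSubalgebra

open LinearMap.BilinForm

variable {R L : Type*} [CommRing R] [LieRing L] [LieAlgebra R L]

theorem apply_lie_eq_zero_of_sub_mem {Φ : LinearMap.BilinForm R L} (hΦ : Φ.lieInvariant L)
    (K : LieSubalgebra R L) {X a b a' b' : L} (hX : ∀ Y ∈ K, Φ X Y = 0)
    (ha : ⁅a, X⁆ = 0) (hb : ⁅b, X⁆ = 0) (ha' : a - a' ∈ K) (hb' : b - b' ∈ K) :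
    Φ X ⁅a', b'⁆ = 0 := by
  obtain ⟨p, hp, rfl⟩ : ∃ p ∈ K, a' = a - p := ⟨a - a', ha', (sub_sub_cancel a a').symm⟩
  obtain ⟨q, hq, rfl⟩ : ∃ q ∈ K, b' = b - q := ⟨b - b', hb', (sub_sub_cancel b b').symm⟩
  have hpb : Φ X ⁅p, b⁆ = 0 := by
    rw [← lie_skew, map_neg, apply_lie_eq_zero_of_lie_eq_zero hΦ hb p, neg_zero]
  simp only [sub_lie, lie_sub, map_sub, apply_lie_eq_zero_of_lie_eq_zero hΦ ha, hpb,
    hX _ (K.lie_mem hp hq), sub_self]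

end LieSubalgebra

theorem adler_kostant_symes_general {g : Type*}
    [LieRing g] [LieAlgebra ℝ g]
    (B : g →ₗ[ℝ] g →ₗ[ℝ] ℝ)
    (hinv : ∀ x y z : g, B ⁅x, y⁆ z + B y ⁅x, z⁆ = 0)
    (gp gm : LieSubalgebra ℝ g)
    (πm : g →ₗ[ℝ] g)
    (hπm : ∀ X : g, πm X ∈ gm ∧ X - πm X ∈ gp)
    (gradf gradh : g → g)
    (hadf : ∀ X : g, ⁅gradf X, X⁆ = 0)
    (hadh : ∀ X : g, ⁅gradh X, X⁆ = 0) :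
    ∀ X : g, (∀ Y ∈ gp, B X Y = 0) →
      B X ⁅πm (gradf X), πm (gradh X)⁆ = 0 := by
  have hB : LinearMap.BilinForm.lieInvariant g B := fun x y z ↦
    eq_neg_of_add_eq_zero_left (hinv x y z)
  intro X hX
  exact gp.apply_lie_eq_zero_of_sub_mem hB hX (hadf X) (hadh X) (hπm _).2 (hπm _).2

/-- **Adler–Kostant–Symes.** Let `g` be a finite-dimensional real Lie algebra with a
nondegenerate symmetric invariant bilinear form `B`, and `g = g₊ ⊕ g₋` a vector-space
direct sum of Lie subalgebras, with `π₋` the projection onto `g₋` along `g₊`. If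
`f, h : g → ℝ` are differentiable with ad-invariant `B`-gradients (`⁅∇f X, X⁆ = 0` and
`⁅∇h X, X⁆ = 0`), then `f` and `h` Poisson commute on `g₊^⊥`: for every `X` with
`B X Y = 0` for all `Y ∈ g₊`, one has `B X ⁅π₋(∇f X), π₋(∇h X)⁆ = 0`. -/
theorem adler_kostant_symes {g : Type*}
    [NormedAddCommGroup g] [NormedSpace ℝ g]
    [LieRing g] [LieAlgebra ℝ g] [FiniteDimensional ℝ g]
    (B : g →ₗ[ℝ] g →ₗ[ℝ] ℝ)
    (hsymm : ∀ x y : g, B x y = B y x)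
    (hnondeg : ∀ x : g, (∀ y : g, B x y = 0) → x = 0)
    (hinv : ∀ x y z : g, B ⁅x, y⁆ z + B y ⁅x, z⁆ = 0)
    (gp gm : LieSubalgebra ℝ g)
    (hcompl : IsCompl gp.toSubmodule gm.toSubmodule)
    (πm : g →ₗ[ℝ] g)
    (hπm : ∀ X : g, πm X ∈ gm ∧ X - πm X ∈ gp)
    (f h : g → ℝ) (hf : Differentiable ℝ f) (hh : Differentiable ℝ h)
    (gradf gradh : g → g)
    (hgradf : ∀ X Y : g, B (gradf X) Y = fderiv ℝ f X Y)
    (hgradh : ∀ X Y : g, B (gradh X) Y = fderiv ℝ h X Y)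
    (hadf : ∀ X : g, ⁅gradf X, X⁆ = 0)
    (hadh : ∀ X : g, ⁅gradh X, X⁆ = 0) :
    ∀ X : g, (∀ Y ∈ gp, B X Y = 0) →
      B X ⁅πm (gradf X), πm (gradh X)⁆ = 0 :=
  adler_kostant_symes_general B hinv gp gm πm hπm gradf gradh hadf hadh
end

section
/- (Ratiu's version of AKS) Let g be a finite-dimensional real Lie algebra with a nondegenerate symmetric invariant bilinear form B, and suppose g = g₊ ⊕ g₋ as a direct sum of vector subspaces, where g₊ is an ideal of g and g₋ is a Lie subalgebra; let π₋ : g → g₋ denote the projection along g₊. Let f, h : g → ℝ be differentiable with B-gradients ∇f, ∇h : g → g, and assume f and h Poisson commute on g: B(X, ⁅∇f(X), ∇h(X)⁆) = 0 for all X ∈ g. Then the restrictions of f and h to g₊^⊥ are in involution: for every X ∈ g with B(X, Y) = 0 for all Y ∈ g₊, one has B(X, ⁅π₋(∇f(X)), π₋(∇h(X))⁆) = 0. -/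
/-!
Write `∇f X = p + π₋(∇f X)` and `∇h X = q + π₋(∇h X)` with `p, q ∈ g₊`. Since `g₊` is an ideal,
`⁅∇f X, ∇h X⁆ ≡ ⁅π₋(∇f X), π₋(∇h X)⁆` modulo `g₊`, and `B X` vanishes on `g₊` when `X ∈ g₊^⊥`.
So on `g₊^⊥` the two brackets agree, and the Kirillov bracket vanishes by assumption.
-/

namespace LieIdeal

variable {R L : Type*} [CommRing R] [LieRing L] [LieAlgebra R L] (I : LieIdeal R L)

theorem lie_sub_lie_mem {a b c d : L} (hac : a - c ∈ I) (hbd : b - d ∈ I) :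
    ⁅a, b⁆ - ⁅c, d⁆ ∈ I := by
  have hsplit : ⁅a, b⁆ - ⁅c, d⁆ = ⁅a - c, b⁆ + ⁅c, b - d⁆ := by
    simp only [sub_lie, lie_sub]
    abel
  rw [hsplit]
  exact add_mem (lie_mem_left R L I _ _ hac) (lie_mem_right R L I _ _ hbd)

theorem apply_lie_eq_of_sub_mem {M : Type*} [AddCommGroup M] [Module R M] (φ : L →ₗ[R] M)
    (hφ : ∀ y ∈ I, φ y = 0) {a b c d : L} (hac : a - c ∈ I) (hbd : b - d ∈ I) :
    φ ⁅a, b⁆ = φ ⁅c, d⁆ :=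
  sub_eq_zero.mp <| by rw [← map_sub]; exact hφ _ (I.lie_sub_lie_mem hac hbd)

end LieIdeal

theorem ratiu_aks_general {g : Type*}
    [LieRing g] [LieAlgebra ℝ g]
    (B : g →ₗ[ℝ] g →ₗ[ℝ] ℝ)
    (gp gm : LieSubalgebra ℝ g)
    (hideal : ∀ x : g, ∀ y ∈ gp, ⁅x, y⁆ ∈ gp)
    (πm : g →ₗ[ℝ] g)
    (hπm : ∀ X : g, πm X ∈ gm ∧ X - πm X ∈ gp)
    (gradf gradh : g → g)
    (hcommute : ∀ X : g, B X ⁅gradf X, gradh X⁆ = 0) :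
    ∀ X : g, (∀ Y ∈ gp, B X Y = 0) →
      B X ⁅πm (gradf X), πm (gradh X)⁆ = 0 := by
  obtain ⟨I, rfl⟩ := (LieSubalgebra.exists_lieIdeal_coe_eq_iff (K := gp)).mpr hideal
  intro X hX
  rw [← hcommute X]
  exact (I.apply_lie_eq_of_sub_mem (B X) hX (hπm _).2 (hπm _).2).symm

/-- **Ratiu's version of AKS.** Let `g` be a finite-dimensional real Lie algebra with a
nondegenerate symmetric invariant bilinear form `B`, `g = g₊ ⊕ g₋` as vector spaces with
`g₊` an ideal and `g₋` a Lie subalgebra, and `π₋` the projection onto `g₋` along `g₊`.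
If `f, h : g → ℝ` are differentiable with `B`-gradients `∇f, ∇h` and Poisson commute on
`g`, i.e. `B X ⁅∇f X, ∇h X⁆ = 0` for all `X`, then their restrictions to `g₊^⊥` are in
involution: for every `X` with `B X Y = 0` for all `Y ∈ g₊`, one has
`B X ⁅π₋(∇f X), π₋(∇h X)⁆ = 0`. -/
theorem ratiu_aks {g : Type*}
    [NormedAddCommGroup g] [NormedSpace ℝ g]
    [LieRing g] [LieAlgebra ℝ g] [FiniteDimensional ℝ g]
    (B : g →ₗ[ℝ] g →ₗ[ℝ] ℝ)
    (hsymm : ∀ x y : g, B x y = B y x)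
    (hnondeg : ∀ x : g, (∀ y : g, B x y = 0) → x = 0)
    (hinv : ∀ x y z : g, B ⁅x, y⁆ z + B y ⁅x, z⁆ = 0)
    (gp gm : LieSubalgebra ℝ g)
    (hideal : ∀ x : g, ∀ y ∈ gp, ⁅x, y⁆ ∈ gp)
    (hcompl : IsCompl gp.toSubmodule gm.toSubmodule)
    (πm : g →ₗ[ℝ] g)
    (hπm : ∀ X : g, πm X ∈ gm ∧ X - πm X ∈ gp)
    (f h : g → ℝ) (hf : Differentiable ℝ f) (hh : Differentiable ℝ h)
    (gradf gradh : g → g)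
    (hgradf : ∀ X Y : g, B (gradf X) Y = fderiv ℝ f X Y)
    (hgradh : ∀ X Y : g, B (gradh X) Y = fderiv ℝ h X Y)
    (hcommute : ∀ X : g, B X ⁅gradf X, gradh X⁆ = 0) :
    ∀ X : g, (∀ Y ∈ gp, B X Y = 0) →
      B X ⁅πm (gradf X), πm (gradh X)⁆ = 0 :=
  ratiu_aks_general B gp gm hideal πm hπm gradf gradh hcommute
end

section
/- Let A be a symmetric invertible 2n×2n real matrix and b(X,Y) = (AX,Y). On the vector space g = ℝX_0 ⊕ ℝ^{2n} ⊕ ℝX_{n+1}, define a skew-symmetric bilinear bracket by [U,V] = b(JAU, V) X_0 and [X_{n+1}, U] = JAU for U, V ∈ ℝ^{2n}, with X_0 central and all other brackets zero; explicitly, [(s,u,t),(s',u',t')] = (b(JAu, u'), t·JAu' − t'·JAu, 0). Then this bracket satisfies the Jacobi identity, so g is a (solvable) Lie algebra. -/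
open Matrix

noncomputable section

/-- The canonical complex structure `J = [[0, -I],[I, 0]]` on `ℝ^{2n}`. -/
def Jmat (n : ℕ) : Matrix (Fin n ⊕ Fin n) (Fin n ⊕ Fin n) ℝ :=
  Matrix.fromBlocks 0 (-1) 1 0

/-- The bilinear form `b(X,Y) = (AX, Y)` on `ℝ^{2n}`. -/
def bForm (n : ℕ) (A : Matrix (Fin n ⊕ Fin n) (Fin n ⊕ Fin n) ℝ)
    (X Y : (Fin n ⊕ Fin n) → ℝ) : ℝ :=
  (A *ᵥ X) ⬝ᵥ Y

/-- The bracket on `g = ℝX₀ ⊕ ℝ^{2n} ⊕ ℝX_{n+1}` (elements written `(s, u, t)`):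
`[(s,u,t),(s',u',t')] = (b(JAu, u'), t·JAu' - t'·JAu, 0)`. -/
def solvBr (n : ℕ) (A : Matrix (Fin n ⊕ Fin n) (Fin n ⊕ Fin n) ℝ)
    (Z W : ℝ × ((Fin n ⊕ Fin n) → ℝ) × ℝ) : ℝ × ((Fin n ⊕ Fin n) → ℝ) × ℝ :=
  (bForm n A ((Jmat n * A) *ᵥ Z.2.1) W.2.1,
   Z.2.2 • ((Jmat n * A) *ᵥ W.2.1) - W.2.2 • ((Jmat n * A) *ᵥ Z.2.1),
   0)

/-!
Write `B = JA` and `ω(u, v) = (ABu, v) = b(JAu, v)`. Since `J` is skew and `A` symmetric,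
`AJA` is skew and `AJAJA` is symmetric; so `ω` is alternating, giving skew-symmetry of the
bracket, and `ω(Bu, v)` is symmetric in `u, v`, which makes the cyclic sum of the `X₀`-components
vanish. The `ℝ^{2n}`-components of the cyclic sum cancel because brackets have no
`X_{n+1}`-component.
-/

lemma Jmat_transpose (n : ℕ) : (Jmat n)ᵀ = -Jmat n := by
  simp [Jmat, fromBlocks_transpose, fromBlocks_neg]

section Congruence

variable {m R : Type*} [Fintype m] [CommRing R] {A J : Matrix m m R}

lemma transpose_mul_mul_eq_neg (hA : A.IsSymm) (hJ : Jᵀ = -J) :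
    (A * J * A)ᵀ = -(A * J * A) := by
  simp [Matrix.transpose_mul, hJ, hA.eq, Matrix.mul_assoc]

lemma isSymm_mul_mul_mul_mul (hA : A.IsSymm) (hJ : Jᵀ = -J) :
    (A * J * A * J * A).IsSymm := by
  simp [Matrix.IsSymm, Matrix.transpose_mul, hJ, hA.eq, Matrix.mul_assoc]

lemma mulVec_dotProduct_comm_of_transpose_eq {M N : Matrix m m R} (h : Mᵀ = N) (u v : m → R) :
    (M *ᵥ u) ⬝ᵥ v = (N *ᵥ v) ⬝ᵥ u := by
  rw [dotProduct_comm, dotProduct_mulVec, ← mulVec_transpose, h]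

end Congruence

section Bracket

variable {n : ℕ} {A : Matrix (Fin n ⊕ Fin n) (Fin n ⊕ Fin n) ℝ}

lemma bForm_mulVec (B : Matrix (Fin n ⊕ Fin n) (Fin n ⊕ Fin n) ℝ) (u v : Fin n ⊕ Fin n → ℝ) :
    bForm n A (B *ᵥ u) v = ((A * B) *ᵥ u) ⬝ᵥ v := by
  rw [bForm, mulVec_mulVec]

lemma solvBr_swap (hA : A.IsSymm) (Z W : ℝ × (Fin n ⊕ Fin n → ℝ) × ℝ) :
    solvBr n A Z W = -solvBr n A W Z := by
  have hskew : (A * (Jmat n * A))ᵀ = -(A * (Jmat n * A)) := by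
    rw [← Matrix.mul_assoc]; exact transpose_mul_mul_eq_neg hA (Jmat_transpose n)
  simp only [solvBr, bForm_mulVec, Prod.neg_mk, Prod.mk.injEq, neg_zero, and_true]
  refine ⟨?_, by abel⟩
  rw [mulVec_dotProduct_comm_of_transpose_eq hskew, neg_mulVec, neg_dotProduct]

lemma solvBr_jacobi (hA : A.IsSymm) (Z W V : ℝ × (Fin n ⊕ Fin n → ℝ) × ℝ) :
    solvBr n A (solvBr n A Z W) V + solvBr n A (solvBr n A W V) Z
      + solvBr n A (solvBr n A V Z) W = 0 := by
  have hsymm := mulVec_dotProduct_comm_of_transpose_eq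
    (isSymm_mul_mul_mul_mul hA (Jmat_transpose n)).eq
  simp only [solvBr, bForm_mulVec, Prod.mk_add_mk, Prod.mk_eq_zero, add_zero, and_true]
  constructor
  · simp only [mulVec_sub, mulVec_smul, sub_dotProduct, smul_dotProduct, mulVec_mulVec,
      smul_eq_mul, ← Matrix.mul_assoc]
    linear_combination Z.2.2 * hsymm W.2.1 V.2.1 + W.2.2 * hsymm V.2.1 Z.2.1
      + V.2.2 * hsymm Z.2.1 W.2.1
  · simp only [zero_smul, zero_sub, mulVec_sub, mulVec_smul]
    module

end Bracket

theorem solvable_lie_algebra_general (n : ℕ)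
    (A : Matrix (Fin n ⊕ Fin n) (Fin n ⊕ Fin n) ℝ)
    (hA : A.IsSymm) :
    (∀ Z W : ℝ × ((Fin n ⊕ Fin n) → ℝ) × ℝ, solvBr n A Z W = -solvBr n A W Z)
    ∧ (∀ Z W V : ℝ × ((Fin n ⊕ Fin n) → ℝ) × ℝ,
        solvBr n A (solvBr n A Z W) V + solvBr n A (solvBr n A W V) Z
          + solvBr n A (solvBr n A V Z) W = 0) :=
  ⟨solvBr_swap hA, solvBr_jacobi hA⟩

/-- For `A` symmetric and invertible, the bracket
`[(s,u,t),(s',u',t')] = (b(JAu, u'), t·JAu' - t'·JAu, 0)` on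
`g = ℝX₀ ⊕ ℝ^{2n} ⊕ ℝX_{n+1}` is skew-symmetric and satisfies the Jacobi identity,
so `g` is a (solvable) Lie algebra. -/
theorem solvable_lie_algebra (n : ℕ)
    (A : Matrix (Fin n ⊕ Fin n) (Fin n ⊕ Fin n) ℝ)
    (hA : A.IsSymm) (hAinv : IsUnit A) :
    (∀ Z W : ℝ × ((Fin n ⊕ Fin n) → ℝ) × ℝ, solvBr n A Z W = -solvBr n A W Z)
    ∧ (∀ Z W V : ℝ × ((Fin n ⊕ Fin n) → ℝ) × ℝ,
        solvBr n A (solvBr n A Z W) V + solvBr n A (solvBr n A W V) Z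
          + solvBr n A (solvBr n A V Z) W = 0) :=
  solvable_lie_algebra_general n A hA
end
end
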